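/- For all t, ρ > 0 and σ = cosh ρ, the function (t, σ) ↦ −ρ²/(4t) (with ρ = arccosh σ) satisfies ∂²/∂σ² (−ρ²/(4t)) = (ρ coth ρ − 1)/(2t sinh²ρ) > 0; i.e., the Gaussian exponent −ρ²/(4t) is strictly convex in σ. -/

import Mathlib

/-- Derivative with respect to `σ = cosh ρ`. -/
noncomputable def sigmaDeriv (g : ℝ → ℝ) (ρ : ℝ) : ℝ := (1 / Real.sinh ρ) * deriv g ρ

/-! Since `∂/∂σ = (1 / sinh ρ) ∂/∂ρ`, one σ-derivative of `-ρ² / (4t)` is `-(ρ / sinh ρ) / (2t)`,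
and a second one is `(ρ cosh ρ - sinh ρ) / (2t sinh³ ρ)`. Positivity is `sinh ρ < ρ cosh ρ`:
the difference vanishes at `0` and has derivative `ρ sinh ρ > 0`. -/

open Real

lemma sigmaDeriv_eq_div_sinh {g : ℝ → ℝ} {g' ρ : ℝ} (hg : HasDerivAt g g' ρ) :
    sigmaDeriv g ρ = g' / sinh ρ := by
  rw [sigmaDeriv, hg.deriv, one_div_mul_eq_div]

lemma sigmaDeriv_neg_sq_div (a : ℝ) :
    sigmaDeriv (fun x => -x ^ 2 / a) = fun x => -2 / a * (x / sinh x) := by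
  funext x
  have hderiv : HasDerivAt (fun x => -x ^ 2 / a) (-(2 * x) / a) x := by
    simpa using ((hasDerivAt_pow 2 x).neg).div_const a
  rw [sigmaDeriv_eq_div_sinh hderiv]
  ring

lemma hasDerivAt_id_div_sinh {x : ℝ} (hx : x ≠ 0) :
    HasDerivAt (fun y => y / sinh y) ((sinh x - x * cosh x) / sinh x ^ 2) x := by
  simpa using (hasDerivAt_id' x).fun_div (hasDerivAt_sinh x) (sinh_ne_zero.2 hx)

lemma sinh_lt_mul_cosh {x : ℝ} (hx : 0 < x) : sinh x < x * cosh x := by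
  have hmono : StrictMonoOn (fun y => y * cosh y - sinh y) (Set.Ici 0) := by
    refine strictMonoOn_of_deriv_pos (convex_Ici 0) (by fun_prop) fun y hy => ?_
    rw [interior_Ici, Set.mem_Ioi] at hy
    have hderiv : HasDerivAt (fun y => y * cosh y - sinh y) (y * sinh y) y :=
      (((hasDerivAt_id' y).mul (hasDerivAt_cosh y)).sub (hasDerivAt_sinh y)).congr_deriv
        (by ring)
    rw [hderiv.deriv]
    exact mul_pos hy (sinh_pos_iff.2 hy)
  simpa using hmono Set.self_mem_Ici hx.le hx

lemma one_lt_mul_coth {x : ℝ} (hx : 0 < x) : 1 < x * (cosh x / sinh x) := by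
  rw [mul_div_assoc', one_lt_div (sinh_pos_iff.2 hx)]
  exact sinh_lt_mul_cosh hx

/-- The Gaussian exponent `-ρ²/(4t)` is strictly convex in `σ = cosh ρ`:
its second σ-derivative equals `(ρ coth ρ − 1)/(2 t sinh² ρ) > 0`. -/
theorem gaussian_exponent_convex (t ρ : ℝ) (ht : 0 < t) (hρ : 0 < ρ) :
    sigmaDeriv (sigmaDeriv (fun x => -x ^ 2 / (4 * t))) ρ =
      (ρ * (Real.cosh ρ / Real.sinh ρ) - 1) / (2 * t * Real.sinh ρ ^ 2) ∧
    0 < (ρ * (Real.cosh ρ / Real.sinh ρ) - 1) / (2 * t * Real.sinh ρ ^ 2) := by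
  have hsinh : sinh ρ ≠ 0 := sinh_ne_zero.2 hρ.ne'
  refine ⟨?_, div_pos (sub_pos.2 (one_lt_mul_coth hρ)) (by positivity)⟩
  rw [sigmaDeriv_neg_sq_div, sigmaDeriv_eq_div_sinh ((hasDerivAt_id_div_sinh hρ.ne').const_mul _)]
  field_simp
  ring
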